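/- arXiv:2112.14979 — 2 statements merged into one kernel-verified Lean document; each statement's English description precedes it below -/
import Mathlib

section
/- If E is a bounded open subset of ℝⁿ with reach(Eᶜ) > ρ > 0, then for any δ ∈ (0, ρ) there exists a natural number M depending on δ and E such that for any i.i.d. uniform sample 𝕏_N = (X₁,…,X_N) from E, P(B(𝕏_N, 3δ) ⊇ E) ≥ 1 - M·exp(-δⁿ N / (n^{n/2} vol(E))). -/
/-!
The points at distance at least `δ` from `Eᶜ` form a compact subset of `E`; cover it by finitely
many balls `B(c, δ/2)`, each contained in `E`. Such a ball contains a cube of side `δ/√n`, so all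
`N` uniform samples miss it with probability at most
`(1 - δⁿ/(n^{n/2} vol E))^N ≤ exp(-δⁿN/(n^{n/2} vol E))`, and a union bound over the centres
gives the estimate once every `x ∈ E` is known to lie within `2δ` of such a point.

For that, positive reach is used: below the reach the nearest-point map of `Eᶜ` is continuous,
so stepping a small distance `ε` from `c` directly away from its nearest point raises the
distance to `Eᶜ` by at least `ε/2`. Hence, writing `d = infDist · Eᶜ`, a maximiser of `d` on the
compact set `{y | dist y x ≤ 2 (d y - d x) ∧ d y ≤ δ}` has `d = δ`.
-/

open MeasureTheory Metric Set ProbabilityTheory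
open scoped ENNReal

/-- The set of points having a unique nearest point in `A`. -/
def Unp {n : ℕ} (A : Set (EuclideanSpace ℝ (Fin n))) : Set (EuclideanSpace ℝ (Fin n)) :=
  {x | ∃! a, a ∈ A ∧ dist x a = Metric.infDist x A}

/-- Federer's reach of `A` at a point `a`. -/
noncomputable def reachAt {n : ℕ} (A : Set (EuclideanSpace ℝ (Fin n)))
    (a : EuclideanSpace ℝ (Fin n)) : ℝ≥0∞ :=
  sSup {r : ℝ≥0∞ | EMetric.ball a r ⊆ Unp A}

/-- Federer's reach of `A`. -/
noncomputable def reach {n : ℕ} (A : Set (EuclideanSpace ℝ (Fin n))) : ℝ≥0∞ :=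
  ⨅ a ∈ A, reachAt A a

section NearestPoint

variable {α : Type*} [MetricSpace α] [Nonempty α] {A : Set α}

noncomputable def nearestPoint (A : Set α) (y : α) : α :=
  Classical.epsilon fun a => a ∈ A ∧ dist y a = infDist y A

variable [ProperSpace α]

lemma nearestPoint_spec (hA : IsClosed A) (hne : A.Nonempty) (y : α) :
    nearestPoint A y ∈ A ∧ dist y (nearestPoint A y) = infDist y A := by
  obtain ⟨a, ha, hd⟩ := hA.exists_infDist_eq_dist hne y
  exact Classical.epsilon_spec (p := fun a => a ∈ A ∧ dist y a = infDist y A) ⟨a, ha, hd.symm⟩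

lemma continuousAt_nearestPoint (hA : IsClosed A) (hne : A.Nonempty) {y : α}
    (hy : ∃! a, a ∈ A ∧ dist y a = infDist y A) : ContinuousAt (nearestPoint A) y := by
  have hK : IsCompact (A ∩ closedBall y (infDist y A + 2)) :=
    (isCompact_closedBall _ _).inter_left hA
  refine hK.tendsto_nhds_of_unique_mapClusterPt ?_ fun b hb hcl => ?_
  · filter_upwards [ball_mem_nhds y one_pos] with y' hy'
    obtain ⟨hA', hd'⟩ := nearestPoint_spec hA hne y'
    refine ⟨hA', mem_closedBall'.2 ?_⟩
    have := infDist_le_infDist_add_dist (x := y') (y := y) (s := A)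
    have := dist_triangle y y' (nearestPoint A y')
    rw [mem_ball'] at hy'
    linarith [dist_comm y y']
  · have hb_min : dist y b ≤ infDist y A := by
      refine le_of_forall_pos_lt_add fun ε hε => ?_
      obtain ⟨y', hb', hy'⟩ :=
        ((hcl.frequently (ball_mem_nhds b (by positivity : 0 < ε / 3))).and_eventually
          (ball_mem_nhds y (by positivity : 0 < ε / 3))).exists
      have := infDist_le_infDist_add_dist (x := y') (y := y) (s := A)
      have := dist_triangle4 y y' (nearestPoint A y') b
      rw [(nearestPoint_spec hA hne y').2] at this
      linarith [dist_comm y y']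
    exact hy.unique ⟨hb.1, hb_min.antisymm (infDist_le_dist_of_mem hb.1)⟩
      (nearestPoint_spec hA hne y)

end NearestPoint

lemma add_half_le_norm_add_smul_sub {F : Type*} [NormedAddCommGroup F] [InnerProductSpace ℝ F]
    {c p a : F} {ε : ℝ} (hε : 0 ≤ ε) (hp : 0 < ‖c - p‖) (hca : ‖c - p‖ ≤ ‖c - a‖)
    (hap : ‖a - p‖ ≤ ‖c - p‖ / 2) :
    ‖c - p‖ + ε / 2 ≤ ‖c + (ε / ‖c - p‖) • (c - p) - a‖ := by
  set v := ‖c - p‖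
  set w := (ε / v) • (c - p)
  have hw : ‖w‖ = ε := by
    rw [norm_smul, Real.norm_of_nonneg (by positivity), div_mul_cancel₀ _ hp.ne']
  have hinner : ε * v / 2 ≤ inner ℝ (c - a) w := by
    have hsplit : inner ℝ (c - a) w = ε / v * (v ^ 2 + inner ℝ (p - a) (c - p)) := by
      rw [real_inner_smul_right, show c - a = (c - p) + (p - a) by abel, inner_add_left,
        real_inner_self_eq_norm_sq]
    have hcs : |inner ℝ (p - a) (c - p)| ≤ v / 2 * v :=
      (abs_real_inner_le_norm _ _).trans (by rw [norm_sub_rev]; gcongr)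
    rw [hsplit, show ε * v / 2 = ε / v * (v ^ 2 - v / 2 * v) by field_simp; ring]
    gcongr
    linarith [neg_abs_le (inner ℝ (p - a) (c - p))]
  have hsq : (v + ε / 2) ^ 2 ≤ ‖c + w - a‖ ^ 2 := by
    rw [show c + w - a = (c - a) + w by abel, norm_add_sq_real, hw]
    nlinarith
  exact (pow_le_pow_iff_left₀ (by positivity) (norm_nonneg _) two_ne_zero).1 hsq

section Reach

variable {n : ℕ} {A : Set (EuclideanSpace ℝ (Fin n))} {ρ : ℝ}

lemma mem_Unp_of_infDist_lt (hA : IsClosed A) (hne : A.Nonempty)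
    (hreach : ENNReal.ofReal ρ < reach A) {y : EuclideanSpace ℝ (Fin n)}
    (hy : infDist y A < ρ) : y ∈ Unp A := by
  obtain ⟨hpA, hpd⟩ := nearestPoint_spec hA hne y
  obtain ⟨r, hr, hρr⟩ := lt_sSup_iff.1 (hreach.trans_le (biInf_le _ hpA))
  exact hr <| (edist_lt_ofReal.2 (hpd ▸ hy)).trans hρr

lemma exists_infDist_add_half_dist_le (hA : IsClosed A) (hne : A.Nonempty)
    (hreach : ENNReal.ofReal ρ < reach A) {c : EuclideanSpace ℝ (Fin n)}
    (hc : 0 < infDist c A) (hcρ : infDist c A < ρ) {η : ℝ} (hη : 0 < η) :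
    ∃ z, 0 < dist z c ∧ dist z c < η ∧ infDist c A + dist z c / 2 ≤ infDist z A := by
  obtain ⟨hpA, hpd⟩ := nearestPoint_spec hA hne c
  set p := nearestPoint A c
  set v := infDist c A
  have hv : ‖c - p‖ = v := by rw [← dist_eq_norm, hpd]
  set γ : ℝ → EuclideanSpace ℝ (Fin n) := fun ε => c + (ε / v) • (c - p)
  have hγ : ∀ ε, 0 ≤ ε → dist (γ ε) c = ε := fun ε hε => by
    rw [dist_eq_norm, add_sub_cancel_left, norm_smul, hv, Real.norm_of_nonneg (by positivity),
      div_mul_cancel₀ _ hc.ne']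
  have hγ0 : γ 0 = c := by simp [γ]
  have hproj : Filter.Tendsto (nearestPoint A ∘ γ) (nhdsWithin 0 (Ioi 0)) (nhds p) := by
    have hγc : Continuous γ := by fun_prop
    have := ((continuousAt_nearestPoint hA hne (mem_Unp_of_infDist_lt hA hne hreach hcρ)).comp_of_eq
      hγc.continuousAt hγ0).mono_left (nhdsWithin_le_nhds (s := Ioi 0))
    rwa [Function.comp_apply, hγ0] at this
  obtain ⟨ε, hεp, hε⟩ := ((hproj.eventually (ball_mem_nhds p (half_pos hc))).and
    (Ioo_mem_nhdsGT hη)).exists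
  obtain ⟨haA, had⟩ := nearestPoint_spec hA hne (γ ε)
  have hpa : ‖c - p‖ ≤ ‖c - nearestPoint A (γ ε)‖ := by
    rw [← dist_eq_norm, ← dist_eq_norm, hpd]
    exact infDist_le_dist_of_mem haA
  have hap : ‖nearestPoint A (γ ε) - p‖ ≤ ‖c - p‖ / 2 := by
    rw [← dist_eq_norm, hv]
    exact (mem_ball.1 hεp).le
  have hgain := add_half_le_norm_add_smul_sub hε.1.le (hv ▸ hc) hpa hap
  rw [hv, ← dist_eq_norm, had] at hgain
  exact ⟨γ ε, by rw [hγ ε hε.1.le]; exact ⟨hε.1, hε.2, hgain⟩⟩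

lemma exists_dist_le_and_le_infDist (hA : IsClosed A) (hne : A.Nonempty)
    (hreach : ENNReal.ofReal ρ < reach A) {δ : ℝ} (hδρ : δ < ρ) {x : EuclideanSpace ℝ (Fin n)}
    (hx : 0 < infDist x A) (hxδ : infDist x A ≤ δ) :
    ∃ c, dist c x ≤ 2 * (δ - infDist x A) ∧ δ ≤ infDist c A := by
  set d := infDist x A
  set W := {y | dist y x ≤ 2 * (infDist y A - d) ∧ infDist y A ≤ δ}
  have hcont : Continuous (infDist · A) := continuous_infDist_pt A
  have hW : IsCompact W := by
    refine isCompact_of_isClosed_isBounded ?_ ((isBounded_closedBall (x := x)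
      (r := 2 * (δ - d))).subset fun y hy => mem_closedBall.2 (by linarith [hy.1, hy.2]))
    exact (isClosed_le (continuous_id.dist continuous_const)
      (continuous_const.mul (hcont.sub continuous_const))).inter (isClosed_le hcont continuous_const)
  have hxW : x ∈ W := ⟨by rw [dist_self, sub_self, mul_zero], hxδ⟩
  obtain ⟨c, hcW, hcmax⟩ := hW.exists_isMaxOn ⟨x, hxW⟩ hcont.continuousOn
  have hdc : d ≤ infDist c A := hcmax hxW
  refine ⟨c, ?_, not_lt.1 fun hcδ => ?_⟩
  · linarith [hcW.1, hcW.2]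
  obtain ⟨z, hz0, hzc, hgain⟩ := exists_infDist_add_half_dist_le hA hne hreach
    (hx.trans_le hdc) (hcδ.trans hδρ) (sub_pos.2 hcδ)
  have hzW : z ∈ W := by
    refine ⟨?_, ?_⟩
    · linarith [dist_triangle z c x, hcW.1]
    · linarith [infDist_le_infDist_add_dist (x := z) (y := c) (s := A)]
  linarith [show infDist z A ≤ infDist c A from hcmax hzW]

lemma exists_finset_closedBall_subset_and_dist_le {E : Set (EuclideanSpace ℝ (Fin n))}
    (hE : IsOpen E) (hEb : Bornology.IsBounded E) (hreach : ENNReal.ofReal ρ < reach Eᶜ)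
    {δ r : ℝ} (hr : 0 < r) (hrδ : r < δ) (hδρ : δ < ρ) :
    ∃ T : Finset (EuclideanSpace ℝ (Fin n)),
      (∀ c ∈ T, closedBall c r ⊆ E) ∧ ∀ x ∈ E, ∃ c ∈ T, dist x c ≤ 2 * δ + r := by
  rcases Eᶜ.eq_empty_or_nonempty with hEc | hEc
  · -- a bounded `E = univ` only exists in dimension `0`
    rw [compl_empty_iff] at hEc
    have : Subsingleton (EuclideanSpace ℝ (Fin n)) := not_nontrivial_iff_subsingleton.1
      fun _ => NormedSpace.unbounded_univ ℝ _ (hEc ▸ hEb)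
    refine ⟨{0}, by simp [hEc], fun x _ => ⟨0, Finset.mem_singleton_self _, ?_⟩⟩
    rw [Subsingleton.elim x 0, dist_self]
    linarith
  set K := {y | δ ≤ infDist y Eᶜ}
  have hKE : K ⊆ E := fun y hy => by_contra fun hyE => by
    linarith [infDist_zero_of_mem (s := Eᶜ) hyE, show δ ≤ infDist y Eᶜ from hy]
  have hK : IsCompact K := isCompact_of_isClosed_isBounded
    (isClosed_le continuous_const (continuous_infDist_pt _)) (hEb.subset hKE)
  obtain ⟨T, hTK, hKT⟩ := hK.elim_nhds_subcover (fun c => ball c r) fun c _ => ball_mem_nhds c hr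
  refine ⟨T, fun c hc => ?_, fun x hx => ?_⟩
  · exact (closedBall_subset_ball hrδ).trans
      ((ball_subset_ball (hTK c hc)).trans ball_infDist_compl_subset)
  obtain ⟨c₀, hxc₀, hc₀⟩ : ∃ c₀, dist x c₀ ≤ 2 * δ ∧ c₀ ∈ K := by
    rcases le_or_gt δ (infDist x Eᶜ) with hxK | hxK
    · exact ⟨x, by rw [dist_self]; linarith, hxK⟩
    have hx0 : 0 < infDist x Eᶜ :=
      (hE.isClosed_compl.notMem_iff_infDist_pos hEc).1 (not_not.2 hx)
    obtain ⟨c₀, hc₀x, hc₀⟩ :=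
      exists_dist_le_and_le_infDist hE.isClosed_compl hEc hreach hδρ hx0 hxK.le
    exact ⟨c₀, by rw [dist_comm]; linarith, hc₀⟩
  obtain ⟨c, hcT, hc₀c⟩ := mem_iUnion₂.1 (hKT hc₀)
  exact ⟨c, hcT, by linarith [dist_triangle x c₀ c, mem_ball.1 hc₀c]⟩

end Reach

lemma ofReal_pow_div_le_volume_closedBall {n : ℕ} (c : EuclideanSpace ℝ (Fin n)) {d : ℝ}
    (hd : 0 ≤ d) :
    ENNReal.ofReal (d ^ n / (n : ℝ) ^ ((n : ℝ) / 2)) ≤ volume (closedBall c (d / 2)) := by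
  set K : ℝ := (n : ℝ) ^ (1 / 2 : ℝ)
  have hK : 0 ≤ K := by positivity
  -- `toLp` is `K`-Lipschitz for the sup metric, so a sup-metric ball of radius `d / (2K)` fits
  have hsub : closedBall c.ofLp (d / (2 * K)) ⊆ WithLp.toLp 2 ⁻¹' closedBall c (d / 2) := by
    intro x hx
    have hlip := (PiLp.lipschitzWith_toLp 2 (fun _ : Fin n => ℝ)).dist_le_mul x c.ofLp
    simp only [Fintype.card_fin, WithLp.toLp_ofLp] at hlip
    rw [mem_preimage, mem_closedBall]
    calc _ ≤ K * dist x c.ofLp := by simpa [K] using hlip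
      _ ≤ K * (d / (2 * K)) := by gcongr; exact mem_closedBall.1 hx
      _ ≤ d / 2 := by
        rcases hK.eq_or_lt with hK0 | hK0
        · rw [← hK0, zero_mul]; positivity
        · exact le_of_eq (by field_simp)
  calc ENNReal.ofReal (d ^ n / (n : ℝ) ^ ((n : ℝ) / 2))
      = volume (closedBall c.ofLp (d / (2 * K))) := by
        rw [Real.volume_pi_closedBall _ (by positivity), Fintype.card_fin,
          show 2 * (d / (2 * K)) = d / K by ring, div_pow, ← Real.rpow_natCast K,
          ← Real.rpow_mul (Nat.cast_nonneg _)]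
        ring_nf
    _ ≤ volume (WithLp.toLp 2 ⁻¹' closedBall c (d / 2)) := measure_mono hsub
    _ = volume (closedBall c (d / 2)) :=
        (PiLp.volume_preserving_toLp _).measure_preimage measurableSet_closedBall.nullMeasurableSet

section Sampling

variable {Ω α : Type*} [MeasurableSpace Ω] [MeasurableSpace α] {P : Measure Ω}

lemma ProbabilityTheory.iIndepFun.measure_iInter_preimage_le_pow {ι : Type*} [Fintype ι] {X : ι → Ω → α}
    (hX : iIndepFun X P) {S : Set α} (hS : MeasurableSet S) {p : ℝ≥0∞}
    (hp : ∀ i, P (X i ⁻¹' S) ≤ p) : P (⋂ i, X i ⁻¹' S) ≤ p ^ Fintype.card ι := by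
  have := hX.measure_inter_preimage_eq_mul Finset.univ (sets := fun _ => S) fun _ _ => hS
  simp only [Finset.mem_univ, iInter_true] at this
  rw [this]
  exact Finset.prod_le_pow_card _ _ _ fun i _ => hp i

variable [IsProbabilityMeasure P]

lemma measure_preimage_compl_le_exp {μ : Measure α} {E B : Set α} {Y : Ω → α}
    (hY : ∀ A, MeasurableSet A → P (Y ⁻¹' A) = μ (A ∩ E) / μ E) (hB : MeasurableSet B) {K : ℝ}
    (hK : ENNReal.ofReal K ≤ μ (B ∩ E)) :
    P (Y ⁻¹' Bᶜ) ≤ ENNReal.ofReal (Real.exp (-(K / (μ E).toReal))) := by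
  set V := (μ E).toReal
  rcases le_or_gt 0 (-(K / V)) with hKV | hKV
  · exact prob_le_one.trans (ENNReal.one_le_ofReal.2 (Real.one_le_exp hKV))
  replace hKV : 0 < K / V := by linarith
  have hV : 0 < V := ENNReal.toReal_nonneg.lt_of_ne fun h : 0 = V => by
    rw [← h, div_zero] at hKV; exact hKV.false
  have hK0 : 0 < K := by simpa [div_mul_cancel₀ _ hV.ne'] using mul_pos hKV hV
  have hEV : μ E = ENNReal.ofReal V :=
    (ENNReal.ofReal_toReal (ENNReal.toReal_pos_iff.1 hV).2.ne).symm
  have hmiss : μ (Bᶜ ∩ E) ≤ ENNReal.ofReal (V - K) := by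
    rw [ENNReal.ofReal_sub _ hK0.le, ← hEV, inter_comm, ← Set.sdiff_eq]
    refine ENNReal.le_sub_of_add_le_left ENNReal.ofReal_ne_top ?_
    rw [← measure_inter_add_sdiff E hB, inter_comm]
    gcongr
  calc P (Y ⁻¹' Bᶜ) = μ (Bᶜ ∩ E) / μ E := hY _ hB.compl
    _ ≤ ENNReal.ofReal (V - K) / ENNReal.ofReal V := by rw [hEV]; gcongr
    _ = ENNReal.ofReal (1 - K / V) := by
        rw [← ENNReal.ofReal_div_of_pos hV, sub_div, div_self hV.ne']
    _ ≤ _ := ENNReal.ofReal_le_ofReal (by linarith [Real.add_one_le_exp (-(K / V))])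

lemma measure_iInter_preimage_compl_le_exp {N : ℕ} {X : Fin N → Ω → α} (hX : iIndepFun X P)
    {μ : Measure α} {E B : Set α}
    (hunif : ∀ i, ∀ A, MeasurableSet A → P (X i ⁻¹' A) = μ (A ∩ E) / μ E)
    (hB : MeasurableSet B) {K : ℝ} (hK : ENNReal.ofReal K ≤ μ (B ∩ E)) :
    P (⋂ i, X i ⁻¹' Bᶜ) ≤ ENNReal.ofReal (Real.exp (-K * N / (μ E).toReal)) := by
  refine (hX.measure_iInter_preimage_le_pow hB.compl
    fun i => measure_preimage_compl_le_exp (hunif i) hB hK).trans_eq ?_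
  rw [Fintype.card_fin, ← ENNReal.ofReal_pow (Real.exp_nonneg _), ← Real.exp_nat_mul]
  congr 2
  ring

lemma one_sub_sum_measure_compl_le_measure_biInter {ι : Type*} (T : Finset ι)
    (S : ι → Set Ω) : 1 - ∑ c ∈ T, P (S c)ᶜ ≤ P (⋂ c ∈ T, S c) := by
  rw [tsub_le_iff_right]
  calc (1 : ℝ≥0∞) = P ((⋂ c ∈ T, S c) ∪ ⋃ c ∈ T, (S c)ᶜ) := by
        rw [← compl_iInter₂, union_compl_self, measure_univ]
    _ ≤ P (⋂ c ∈ T, S c) + ∑ c ∈ T, P (S c)ᶜ :=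
        (measure_union_le _ _).trans (by gcongr; exact measure_biUnion_finset_le _ _)

end Sampling

theorem cover_prob_of_positive_reach_general {n : ℕ}
    (E : Set (EuclideanSpace ℝ (Fin n))) (hEopen : IsOpen E)
    (hEbdd : Bornology.IsBounded E)
    (ρ : ℝ) (hreach : ENNReal.ofReal ρ < reach Eᶜ)
    (δ : ℝ) (hδ0 : 0 < δ) (hδρ : δ < ρ)
    {Ω : Type*} [MeasurableSpace Ω] (P : Measure Ω) [IsProbabilityMeasure P] :
    ∃ M : ℕ, ∀ (N : ℕ) (X : Fin N → Ω → EuclideanSpace ℝ (Fin n)),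
      iIndepFun X P →
      (∀ i, ∀ A : Set (EuclideanSpace ℝ (Fin n)), MeasurableSet A →
        P (X i ⁻¹' A) = volume (A ∩ E) / volume E) →
      1 - (M : ℝ≥0∞) *
          ENNReal.ofReal (Real.exp (-(δ ^ n) * N / ((n : ℝ) ^ ((n : ℝ) / 2) * (volume E).toReal))) ≤
        P {ω | E ⊆ ⋃ i, Metric.closedBall (X i ω) (3 * δ)} := by
  obtain ⟨T, hTE, hTcov⟩ := exists_finset_closedBall_subset_and_dist_le hEopen hEbdd hreach
    (half_pos hδ0) (half_lt_self hδ0) hδρ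
  refine ⟨T.card, fun N X hX hunif => ?_⟩
  set bound := ENNReal.ofReal
    (Real.exp (-(δ ^ n) * N / ((n : ℝ) ^ ((n : ℝ) / 2) * (volume E).toReal)))
  have hmiss : ∀ c ∈ T, P (⋃ i, X i ⁻¹' closedBall c (δ / 2))ᶜ ≤ bound := fun c hc => by
    simp only [compl_iUnion, ← preimage_compl]
    refine (measure_iInter_preimage_compl_le_exp hX hunif measurableSet_closedBall
      (K := δ ^ n / (n : ℝ) ^ ((n : ℝ) / 2)) ?_).trans_eq ?_
    · rw [inter_eq_left.2 (hTE c hc)]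
      exact ofReal_pow_div_le_volume_closedBall c hδ0.le
    · congr 2
      ring
  have hcover : (⋂ c ∈ T, ⋃ i, X i ⁻¹' closedBall c (δ / 2)) ⊆
      {ω | E ⊆ ⋃ i, closedBall (X i ω) (3 * δ)} := fun ω hω x hx => by
    obtain ⟨c, hcT, hxc⟩ := hTcov x hx
    obtain ⟨i, hi⟩ := mem_iUnion.1 (mem_iInter₂.1 hω c hcT)
    exact mem_iUnion.2 ⟨i, mem_closedBall.2
      (by linarith [dist_triangle x c (X i ω), mem_closedBall'.1 hi])⟩
  calc 1 - T.card * bound ≤ 1 - ∑ c ∈ T, P (⋃ i, X i ⁻¹' closedBall c (δ / 2))ᶜ := by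
        gcongr
        simpa using Finset.sum_le_card_nsmul T _ bound hmiss
    _ ≤ P (⋂ c ∈ T, ⋃ i, X i ⁻¹' closedBall c (δ / 2)) :=
        one_sub_sum_measure_compl_le_measure_biInter T _
    _ ≤ _ := measure_mono hcover

theorem cover_prob_of_positive_reach {n : ℕ}
    (E : Set (EuclideanSpace ℝ (Fin n))) (hEopen : IsOpen E)
    (hEbdd : Bornology.IsBounded E)
    (ρ : ℝ) (hρ : 0 < ρ) (hreach : ENNReal.ofReal ρ < reach Eᶜ)
    (δ : ℝ) (hδ0 : 0 < δ) (hδρ : δ < ρ)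
    {Ω : Type*} [MeasurableSpace Ω] (P : Measure Ω) [IsProbabilityMeasure P] :
    ∃ M : ℕ, ∀ (N : ℕ) (X : Fin N → Ω → EuclideanSpace ℝ (Fin n)),
      iIndepFun X P →
      (∀ i, ∀ A : Set (EuclideanSpace ℝ (Fin n)), MeasurableSet A →
        P (X i ⁻¹' A) = volume (A ∩ E) / volume E) →
      1 - (M : ℝ≥0∞) *
          ENNReal.ofReal (Real.exp (-(δ ^ n) * N / ((n : ℝ) ^ ((n : ℝ) / 2) * (volume E).toReal))) ≤
        P {ω | E ⊆ ⋃ i, Metric.closedBall (X i ω) (3 * δ)} :=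
  cover_prob_of_positive_reach_general E hEopen hEbdd ρ hreach δ hδ0 hδρ P
end

section
/- Let Σ, Ω ⊆ ℝⁿ be sets of finite perimeter, λ > 0, and define the energy E(Σ) = Per(Σ) + λ·vol(Σ Δ Ω). Suppose B_r is an open ball with B_r ⊆ Ω and H^{n-1}(∂_*Σ ∩ ∂B_r) = 0. Then E(Σ ∪ B_r) - E(Σ) = -H^{n-1}(∂_*Σ ∩ (B_r)^i_*) + H^{n-1}(∂B_r ∩ Σ^o_*) - λ·vol(B_r \ Σ). -/
open MeasureTheory Metric Set Filter
open scoped ENNReal Topology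

variable {n : ℕ}

/-- Upper density of `A` at `x` (with normalization `rⁿ`). -/
noncomputable def upperDens (A : Set (EuclideanSpace ℝ (Fin n)))
    (x : EuclideanSpace ℝ (Fin n)) : ℝ≥0∞ :=
  Filter.limsup (fun r : ℝ => volume (Metric.ball x r ∩ A) / ENNReal.ofReal (r ^ n)) (𝓝[>] 0)

/-- Measure-theoretic boundary `∂_* A`. -/
def mtBoundary (A : Set (EuclideanSpace ℝ (Fin n))) : Set (EuclideanSpace ℝ (Fin n)) :=
  {x | 0 < upperDens A x ∧ 0 < upperDens Aᶜ x}

/-- Measure-theoretic interior `A^i_*`. -/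
def mtInterior (A : Set (EuclideanSpace ℝ (Fin n))) : Set (EuclideanSpace ℝ (Fin n)) :=
  {x | upperDens Aᶜ x = 0}

/-- Measure-theoretic exterior `A^o_*`. -/
def mtExterior (A : Set (EuclideanSpace ℝ (Fin n))) : Set (EuclideanSpace ℝ (Fin n)) :=
  {x | upperDens A x = 0}

/-- The flat-norm energy `E(Σ) = Per(Σ) + λ·vol(Σ Δ Ω)`, where the perimeter is
`H^{n-1}` of the measure-theoretic boundary. -/
noncomputable def fnEnergy (lam : ℝ) (Om S : Set (EuclideanSpace ℝ (Fin n))) : ℝ≥0∞ :=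
  μH[(n : ℝ) - 1] (mtBoundary S) + ENNReal.ofReal lam * volume ((S \ Om) ∪ (Om \ S))


/-! Densities are local, so the measure-theoretic boundary of `Σ ∪ B_r` agrees with that of `Σ`
off `closedBall x r` and misses `B_r`, where `Σ ∪ B_r` has full density. Every point of the
sphere has positive upper density both in `B_r` and in its complement, so a sphere point lies in
`∂_*(Σ ∪ B_r)` exactly when it lies in `Σ^o_*`, up to the `H^{n-1}`-null set `∂_*Σ ∩ ∂B_r`.
Since `B_r ⊆ Ω`, passing from `Σ` to `Σ ∪ B_r` removes exactly `B_r \ Σ` from `Σ Δ Ω`. -/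

theorem ENNReal.limsup_add_le' {ι : Type*} {f : Filter ι} (u v : ι → ℝ≥0∞) :
    limsup (u + v) f ≤ limsup u f + limsup v f := by
  refine ENNReal.le_of_forall_pos_le_add fun ε hε hfin => ?_
  obtain ⟨hu, hv⟩ := ENNReal.add_lt_top.1 hfin
  have hε2 : (ε / 2 : ℝ≥0∞) ≠ 0 := by simpa using hε.ne'
  refine limsup_le_of_le (by isBoundedDefault) ?_
  filter_upwards [eventually_lt_of_limsup_lt (ENNReal.lt_add_right hu.ne hε2),
    eventually_lt_of_limsup_lt (ENNReal.lt_add_right hv.ne hε2)] with i hui hvi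
  calc (u + v) i ≤ (limsup u f + ε / 2) + (limsup v f + ε / 2) := add_le_add hui.le hvi.le
    _ = limsup u f + limsup v f + ε := by rw [add_add_add_comm, ENNReal.add_halves]

section Density

variable {A A' T U : Set (EuclideanSpace ℝ (Fin n))} {x y : EuclideanSpace ℝ (Fin n)}

lemma upperDens_mono (h : A ⊆ A') (x : EuclideanSpace ℝ (Fin n)) :
    upperDens A x ≤ upperDens A' x :=
  limsup_le_limsup (Eventually.of_forall fun _ =>
    ENNReal.div_le_div_right (measure_mono (inter_subset_inter_right _ h)) _)

lemma upperDens_le_add_of_subset_union (h : A ⊆ A' ∪ T) (x : EuclideanSpace ℝ (Fin n)) :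
    upperDens A x ≤ upperDens A' x + upperDens T x := by
  calc upperDens A x
      ≤ limsup ((fun r : ℝ => volume (ball x r ∩ A') / ENNReal.ofReal (r ^ n)) +
          fun r => volume (ball x r ∩ T) / ENNReal.ofReal (r ^ n)) (𝓝[>] 0) := by
        refine limsup_le_limsup (Eventually.of_forall fun r => ?_)
        rw [Pi.add_apply, ← ENNReal.add_div]
        refine ENNReal.div_le_div_right ((measure_mono ?_).trans (measure_union_le _ _)) _
        rw [← inter_union_distrib_left]
        exact inter_subset_inter_right _ h
    _ ≤ upperDens A' x + upperDens T x := by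
        unfold upperDens
        exact ENNReal.limsup_add_le' _ _

lemma upperDens_empty (x : EuclideanSpace ℝ (Fin n)) : upperDens ∅ x = 0 := by
  simp only [upperDens, inter_empty, measure_empty, ENNReal.zero_div]
  exact limsup_const_bot

lemma upperDens_congr (hU : U ∈ 𝓝 y) (h : A ∩ U = A' ∩ U) : upperDens A y = upperDens A' y := by
  obtain ⟨ε, hε, hεU⟩ := Metric.mem_nhds_iff.1 hU
  refine limsup_congr ?_
  filter_upwards [Ioo_mem_nhdsGT hε] with r hr
  have hrU : ball y r ⊆ U := (ball_subset_ball hr.2.le).trans hεU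
  rw [← inter_eq_left.2 hrU, inter_assoc, inter_comm U A, h, inter_comm A' U, ← inter_assoc]

lemma interior_subset_mtInterior : interior A ⊆ mtInterior A := by
  intro y hy
  have hAc : Aᶜ ∩ interior A = ∅ ∩ interior A := by
    rw [empty_inter, ← disjoint_iff_inter_eq_empty, disjoint_compl_left_iff_subset]
    exact interior_subset
  exact (upperDens_congr (isOpen_interior.mem_nhds hy) hAc).trans (upperDens_empty y)

lemma disjoint_mtBoundary_mtInterior : Disjoint (mtBoundary A) (mtInterior A) :=
  disjoint_left.2 fun _ hb hi => hb.2.ne' hi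

lemma mtBoundary_inter_eq_of_inter_eq (hU : IsOpen U) (h : A ∩ U = A' ∩ U) :
    mtBoundary A ∩ U = mtBoundary A' ∩ U := by
  have hc : Aᶜ ∩ U = A'ᶜ ∩ U := by
    ext z
    have hz := congrArg (z ∈ ·) h
    simp only [mem_inter_iff, mem_compl_iff, eq_iff_iff] at hz ⊢
    tauto
  ext y
  simp only [mem_inter_iff, mtBoundary, mem_ofPred_eq]
  refine and_congr_left fun hy => ?_
  rw [upperDens_congr (hU.mem_nhds hy) h, upperDens_congr (hU.mem_nhds hy) hc]

lemma mtBoundary_union_subset : mtBoundary (A ∪ T) ⊆ mtExterior A ∪ mtBoundary A := by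
  rintro y ⟨-, hc⟩
  by_cases hA : upperDens A y = 0
  · exact Or.inl hA
  · exact Or.inr ⟨pos_iff_ne_zero.2 hA,
      hc.trans_le (upperDens_mono (compl_subset_compl.2 subset_union_left) y)⟩

lemma mtExterior_inter_mtBoundary_subset : mtExterior A ∩ mtBoundary T ⊆ mtBoundary (A ∪ T) := by
  rintro y ⟨hA, hT, hTc⟩
  have hle : upperDens Tᶜ y ≤ upperDens (A ∪ T)ᶜ y + upperDens A y :=
    upperDens_le_add_of_subset_union (fun z hz => by by_cases z ∈ A <;> simp_all) y
  rw [show upperDens A y = 0 from hA, add_zero] at hle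
  exact ⟨hT.trans_le (upperDens_mono subset_union_right y), hTc.trans_le hle⟩

/-- The lower bound comes from `volume (ball p (c * ρ)) = (c * ρ) ^ n * volume (ball 0 1)`. -/
lemma upperDens_pos_of_frequently_ball_subset {c : ℝ} (hc : 0 < c)
    (h : ∃ᶠ ρ in 𝓝[>] 0, ∃ p, ball p (c * ρ) ⊆ ball x ρ ∩ A) : 0 < upperDens A x := by
  set κ := ENNReal.ofReal (c ^ n) * volume (ball (0 : EuclideanSpace ℝ (Fin n)) 1)
  have hκ : 0 < κ := ENNReal.mul_pos (ENNReal.ofReal_pos.2 (by positivity)).ne'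
    (measure_ball_pos _ _ one_pos).ne'
  refine hκ.trans_le (le_limsup_of_frequently_le' ?_)
  refine (h.and_eventually self_mem_nhdsWithin).mono fun ρ ⟨⟨p, hp⟩, hρ⟩ => ?_
  have hρ0 : (0 : ℝ) < ρ := hρ
  rw [ENNReal.le_div_iff_mul_le (Or.inl (ENNReal.ofReal_pos.2 (by positivity)).ne')
    (Or.inl ENNReal.ofReal_ne_top)]
  calc κ * ENNReal.ofReal (ρ ^ n) = volume (ball p (c * ρ)) := by
        rw [Measure.addHaar_ball_of_pos _ _ (by positivity), finrank_euclideanSpace_fin, mul_pow,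
          ENNReal.ofReal_mul (by positivity)]
        ring
    _ ≤ volume (ball x ρ ∩ A) := measure_mono hp

lemma upperDens_ball_pos_of_mem_closedBall {r : ℝ} (hr : 0 < r) (hy : y ∈ closedBall x r) :
    0 < upperDens (ball x r) y := by
  have hyx : dist y x ≤ r := hy
  refine upperDens_pos_of_frequently_ball_subset one_half_pos (Eventually.frequently ?_)
  filter_upwards [Ioo_mem_nhdsGT (by positivity : (0 : ℝ) < 2 * r)] with ρ ⟨hρ, hρr⟩
  have ht : ρ / (2 * r) * r = ρ / 2 := by field_simp
  have ht1 : ρ / (2 * r) ≤ 1 := (div_le_one (by positivity)).2 hρr.le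
  refine ⟨AffineMap.lineMap y x (ρ / (2 * r)),
    subset_inter (ball_subset_ball' ?_) (ball_subset_ball' ?_)⟩
  · rw [dist_lineMap_left, Real.norm_of_nonneg (by positivity)]
    nlinarith [mul_le_mul_of_nonneg_left hyx (by positivity : 0 ≤ ρ / (2 * r))]
  · rw [dist_lineMap_right, Real.norm_of_nonneg (by linarith)]
    nlinarith [mul_le_mul_of_nonneg_left hyx (by linarith : 0 ≤ 1 - ρ / (2 * r))]

lemma upperDens_compl_ball_pos {r : ℝ} (hr : 0 < r) (hy : r ≤ dist y x) :
    0 < upperDens (ball x r)ᶜ y := by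
  have hd : 0 < dist y x := hr.trans_le hy
  refine upperDens_pos_of_frequently_ball_subset one_half_pos (Eventually.frequently ?_)
  filter_upwards [self_mem_nhdsWithin] with ρ (hρ : 0 < ρ)
  -- move from `y` a distance `ρ / 2` directly away from `x`
  have ht : ρ / (2 * dist y x) * dist y x = ρ / 2 := by field_simp
  refine ⟨AffineMap.lineMap y x (-(ρ / (2 * dist y x))), subset_inter (ball_subset_ball' ?_)
    (ball_disjoint_ball ?_).subset_compl_left⟩
  · rw [dist_lineMap_left, norm_neg, Real.norm_of_nonneg (by positivity), ht]
    linarith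
  · rw [dist_comm, dist_lineMap_right, sub_neg_eq_add, Real.norm_of_nonneg (by positivity),
      add_mul, one_mul, ht]
    linarith

lemma mtInterior_ball {r : ℝ} (hr : 0 < r) : mtInterior (ball x r) = ball x r := by
  refine subset_antisymm (fun y hy => ?_)
    (isOpen_ball.interior_eq.superset.trans interior_subset_mtInterior)
  by_contra hyB
  exact (upperDens_compl_ball_pos hr (not_lt.1 hyB)).ne' hy

lemma sphere_subset_mtBoundary_ball {r : ℝ} (hr : 0 < r) : sphere x r ⊆ mtBoundary (ball x r) :=
  fun _ hy => ⟨upperDens_ball_pos_of_mem_closedBall hr (sphere_subset_closedBall hy),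
    upperDens_compl_ball_pos hr (mem_sphere.1 hy).ge⟩

end Density

lemma measure_eq_inter_ball_add_inter_sphere_add_diff_closedBall {α : Type*}
    [PseudoMetricSpace α] [MeasurableSpace α] [OpensMeasurableSpace α] (μ : Measure α)
    (s : Set α) (x : α) (r : ℝ) :
    μ s = μ (s ∩ ball x r) + μ (s ∩ sphere x r) + μ (s \ closedBall x r) := by
  rw [← measure_inter_add_sdiff s measurableSet_closedBall,
    ← measure_inter_add_sdiff (s ∩ closedBall x r) measurableSet_ball, inter_assoc,
    inter_eq_right.2 ball_subset_closedBall, inter_sdiff_assoc, closedBall_sdiff_ball]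

open scoped symmDiff in
lemma measure_symmDiff_eq_union_add_diff {α : Type*} [MeasurableSpace α] (μ : Measure α)
    {s t u : Set α} (hu : MeasurableSet u) (hut : u ⊆ t) :
    μ (s ∆ t) = μ ((s ∪ u) ∆ t) + μ (u \ s) := by
  have hin : s ∆ t ∩ u = u \ s := by
    ext z
    have := @hut z
    simp only [Set.symmDiff_def, mem_union, Set.mem_sdiff, mem_inter_iff]
    tauto
  have hout : s ∆ t \ u = (s ∪ u) ∆ t := by
    ext z
    have := @hut z
    simp only [Set.symmDiff_def, mem_union, Set.mem_sdiff]
    tauto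
  rw [← measure_inter_add_sdiff (s ∆ t) hu, hin, hout, add_comm]

lemma measure_mtBoundary_union_ball (μ : Measure (EuclideanSpace ℝ (Fin n)))
    {S : Set (EuclideanSpace ℝ (Fin n))} {x : EuclideanSpace ℝ (Fin n)} {r : ℝ} (hr : 0 < r)
    (hnull : μ (mtBoundary S ∩ sphere x r) = 0) :
    μ (mtBoundary (S ∪ ball x r)) =
      μ (sphere x r ∩ mtExterior S) + μ (mtBoundary S \ closedBall x r) := by
  have hin : mtBoundary (S ∪ ball x r) ∩ ball x r = ∅ := by
    refine (disjoint_mtBoundary_mtInterior.mono_right ?_).inter_eq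
    exact (isOpen_ball.subset_interior_iff.2 subset_union_right).trans interior_subset_mtInterior
  have hout : mtBoundary (S ∪ ball x r) \ closedBall x r = mtBoundary S \ closedBall x r := by
    rw [sdiff_eq, sdiff_eq]
    refine mtBoundary_inter_eq_of_inter_eq isClosed_closedBall.isOpen_compl ?_
    rw [union_inter_distrib_right,
      (disjoint_compl_right_iff_subset.2 ball_subset_closedBall).inter_eq, union_empty]
  have hsphere : μ (mtBoundary (S ∪ ball x r) ∩ sphere x r) = μ (sphere x r ∩ mtExterior S) := by
    refine le_antisymm ?_ (measure_mono fun y ⟨hy, he⟩ =>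
      ⟨mtExterior_inter_mtBoundary_subset ⟨he, sphere_subset_mtBoundary_ball hr hy⟩, hy⟩)
    calc μ (mtBoundary (S ∪ ball x r) ∩ sphere x r)
        ≤ μ ((sphere x r ∩ mtExterior S) ∪ (mtBoundary S ∩ sphere x r)) :=
          measure_mono fun y ⟨hb, hy⟩ =>
            (mtBoundary_union_subset hb).imp (fun he => ⟨hy, he⟩) (fun hb' => ⟨hb', hy⟩)
      _ ≤ μ (sphere x r ∩ mtExterior S) := by
          simpa only [hnull, add_zero] using
            measure_union_le (μ := μ) (sphere x r ∩ mtExterior S) (mtBoundary S ∩ sphere x r)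
  rw [measure_eq_inter_ball_add_inter_sphere_add_diff_closedBall μ _ x r, hin, hout, hsphere,
    measure_empty, zero_add]

theorem energy_change_of_adding_ball_general
    (S Om : Set (EuclideanSpace ℝ (Fin n))) (lam : ℝ) (x : EuclideanSpace ℝ (Fin n)) (r : ℝ)
    (hr : 0 < r) (hball : Metric.ball x r ⊆ Om)
    (hnull : μH[(n : ℝ) - 1] (mtBoundary S ∩ Metric.sphere x r) = 0) :
    fnEnergy lam Om (S ∪ Metric.ball x r) +
        μH[(n : ℝ) - 1] (mtBoundary S ∩ mtInterior (Metric.ball x r)) +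
        ENNReal.ofReal lam * volume (Metric.ball x r \ S) =
      fnEnergy lam Om S + μH[(n : ℝ) - 1] (Metric.sphere x r ∩ mtExterior S) := by
  have hperS : μH[(n : ℝ) - 1] (mtBoundary S) =
      μH[(n : ℝ) - 1] (mtBoundary S ∩ ball x r) +
        μH[(n : ℝ) - 1] (mtBoundary S \ closedBall x r) := by
    rw [measure_eq_inter_ball_add_inter_sphere_add_diff_closedBall _ _ x r, hnull, add_zero]
  rw [fnEnergy, fnEnergy, ← Set.symmDiff_def, ← Set.symmDiff_def, mtInterior_ball hr,
    measure_mtBoundary_union_ball _ hr hnull, hperS,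
    measure_symmDiff_eq_union_add_diff volume (s := S) measurableSet_ball hball, mul_add]
  ring

theorem energy_change_of_adding_ball
    (S Om : Set (EuclideanSpace ℝ (Fin n))) (hS : MeasurableSet S) (hOm : MeasurableSet Om)
    (hPerS : μH[(n : ℝ) - 1] (mtBoundary S) < ⊤)
    (hPerOm : μH[(n : ℝ) - 1] (mtBoundary Om) < ⊤)
    (lam : ℝ) (hlam : 0 < lam)
    (x : EuclideanSpace ℝ (Fin n)) (r : ℝ) (hr : 0 < r)
    (hball : Metric.ball x r ⊆ Om)
    (hnull : μH[(n : ℝ) - 1] (mtBoundary S ∩ Metric.sphere x r) = 0) :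
    fnEnergy lam Om (S ∪ Metric.ball x r) +
        μH[(n : ℝ) - 1] (mtBoundary S ∩ mtInterior (Metric.ball x r)) +
        ENNReal.ofReal lam * volume (Metric.ball x r \ S) =
      fnEnergy lam Om S + μH[(n : ℝ) - 1] (Metric.sphere x r ∩ mtExterior S) :=
  energy_change_of_adding_ball_general S Om lam x r hr hball hnull
end
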